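/- arXiv:1403.3173 — 7 statements merged into one kernel-verified Lean document; each statement's English description precedes it below -/
import Mathlib

section
/- The following are equivalent: (i) E(|u|²) < ∞ μ-a.e.; (ii) the measure on 𝒜 defined by A ↦ ∫_A |u|² dμ (A ∈ 𝒜), i.e. the restriction to 𝒜 of the measure with density |u|² with respect to μ, is σ-finite. -/
/-!
Both conditions only concern `m`-measurable sets, so everything can be read on the trimmed
measure `μ.trim hm`. There, the restriction of `|u|² μ` to `m` is `g · μ.trim hm`, and a measure
with density `g` over a σ-finite measure is σ-finite exactly when `g < ∞` almost everywhere: one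
direction cuts `X` into the pieces where `g ≤ n`, the other recovers `g` as a Radon–Nikodym
derivative, which is finite a.e.
-/

open MeasureTheory Filter ENNReal NNReal

noncomputable section

variable {X : Type*}

/-- A set `A` in the sub-σ-algebra `m` is *admissible* for the weight `u` if
`μ A + ∫_A |u|² dμ < ∞`. -/
def Admissible (m : MeasurableSpace X) [m0 : MeasurableSpace X] (μ : Measure X)
    (u : X → ℂ) (A : Set X) : Prop :=
  MeasurableSet[m] A ∧ μ A + ∫⁻ x in A, (‖u x‖₊ : ℝ≥0∞) ^ 2 ∂μ < ⊤

/-- `gf` is a version of `E(u·f)`, i.e. `gf` is an `m`-measurable function in `L²(μ)` with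
`∫_A u·f dμ = ∫_A gf dμ` for every admissible `A`.  `f ∈ D(EM_u)` iff `f ∈ L²(μ)` and such a
`gf` exists. -/
def IsWCE (m : MeasurableSpace X) [m0 : MeasurableSpace X] (μ : Measure X)
    (u f gf : X → ℂ) : Prop :=
  StronglyMeasurable[m] gf ∧ MemLp gf 2 μ ∧
    ∀ A : Set X, Admissible m μ u A → ∫ x in A, u x * f x ∂μ = ∫ x in A, gf x ∂μ

namespace MeasureTheory

variable {m m0 : MeasurableSpace X}

theorem ae_trim_iff (hm : m ≤ m0) {μ : Measure[m0] X} {p : X → Prop}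
    (hp : MeasurableSet[m] {x | p x}) : (∀ᵐ x ∂μ.trim hm, p x) ↔ ∀ᵐ x ∂μ, p x := by
  rw [ae_iff, ae_iff, ← Set.compl_ofPred, trim_measurableSet_eq hm hp.compl]

theorem sigmaFinite_withDensity_iff_ae_lt_top {ν : Measure X} [SigmaFinite ν] {f : X → ℝ≥0∞}
    (hf : AEMeasurable f ν) : SigmaFinite (ν.withDensity f) ↔ ∀ᵐ x ∂ν, f x < ∞ := by
  refine ⟨fun _ ↦ ?_, fun h ↦ SigmaFinite.withDensity_of_ne_top (h.mono fun _ ↦ ne_of_lt)⟩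
  filter_upwards [Measure.rnDeriv_lt_top (ν.withDensity f) ν, Measure.rnDeriv_withDensity₀ ν hf]
    with x hx hfx
  rwa [← hfx]

theorem trim_withDensity_eq_of_setLIntegral_eq (hm : m ≤ m0) {μ : Measure[m0] X}
    {f g : X → ℝ≥0∞} (hg : Measurable[m] g)
    (hfg : ∀ A, MeasurableSet[m] A → ∫⁻ x in A, f x ∂μ = ∫⁻ x in A, g x ∂μ) :
    (μ.withDensity f).trim hm = (μ.trim hm).withDensity g := by
  rw [← trim_withDensity hm hg]
  refine @Measure.ext _ m _ _ fun A hA ↦ ?_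
  rw [trim_measurableSet_eq hm hA, trim_measurableSet_eq hm hA, withDensity_apply _ (hm A hA),
    withDensity_apply _ (hm A hA), hfg A hA]

end MeasureTheory

theorem stmt2_general (m : MeasurableSpace X) [m0 : MeasurableSpace X] (hm : m ≤ m0)
    (μ : Measure X) [SigmaFinite (μ.trim hm)]
    (u : X → ℂ)
    (g : X → ℝ≥0∞) (hgm : Measurable[m] g)
    (hg : ∀ A : Set X, MeasurableSet[m] A →
      ∫⁻ x in A, (‖u x‖₊ : ℝ≥0∞) ^ 2 ∂μ = ∫⁻ x in A, g x ∂μ) :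
    (∀ᵐ x ∂μ, g x < ⊤) ↔
      SigmaFinite ((μ.withDensity fun x => (‖u x‖₊ : ℝ≥0∞) ^ 2).trim hm) := by
  rw [trim_withDensity_eq_of_setLIntegral_eq hm hgm hg,
    sigmaFinite_withDensity_iff_ae_lt_top hgm.aemeasurable,
    ae_trim_iff hm (measurableSet_lt hgm measurable_const)]

/-- `E(|u|²) < ∞` a.e. iff the restriction to `m` of the measure with density
`|u|²` with respect to `μ` is σ-finite. -/
theorem stmt2 (m : MeasurableSpace X) [m0 : MeasurableSpace X] (hm : m ≤ m0)
    (μ : Measure X) [SigmaFinite μ] [SigmaFinite (μ.trim hm)]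
    (u : X → ℂ) (hu : Measurable u)
    (g : X → ℝ≥0∞) (hgm : Measurable[m] g)
    (hg : ∀ A : Set X, MeasurableSet[m] A →
      ∫⁻ x in A, (‖u x‖₊ : ℝ≥0∞) ^ 2 ∂μ = ∫⁻ x in A, g x ∂μ) :
    (∀ᵐ x ∂μ, g x < ⊤) ↔
      SigmaFinite ((μ.withDensity fun x => (‖u x‖₊ : ℝ≥0∞) ^ 2).trim hm) :=
  stmt2_general m (m0 := m0) hm μ u g hgm hg
end
end

section
/- Assume E(|u|²) < ∞ μ-a.e. Then the operator EM_u : D(EM_u) → L²(μ) is closed; that is, whenever f_n ∈ D(EM_u), f_n → f in L²(μ), and EM_u f_n → g in L²(μ), one has f ∈ D(EM_u) and EM_u f = g. -/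
/-!
The `m`-measurable elements of `L²(μ)` form a closed subspace, so the limit `g'` of the
`EM_u fₙ` has an `m`-measurable version. On an admissible set `A` we have `u ∈ L²(μ|_A)` and
`μ A < ∞`, so by Cauchy–Schwarz both `h ↦ ∫_A u h` and `h ↦ ∫_A h` are continuous on
`L²(μ)`; hence `∫_A u fₙ = ∫_A EM_u fₙ` passes to the limit `∫_A u f = ∫_A g'`.
-/

open MeasureTheory Filter ENNReal NNReal

noncomputable section

variable {X : Type*}

section L2Convergence

variable {α ι 𝕜 : Type*} [MeasurableSpace α] {ν : Measure α} {l : Filter ι}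
  [NormedRing 𝕜] [NormedSpace ℝ 𝕜]

theorem tendsto_integral_mul_of_tendsto_eLpNorm_two {w f : α → 𝕜} {F : ι → α → 𝕜}
    (hw : MemLp w 2 ν) (hF : ∀ i, MemLp (F i) 2 ν) (hf : MemLp f 2 ν)
    (h : Tendsto (fun i => eLpNorm (F i - f) 2 ν) l (nhds 0)) :
    Tendsto (fun i => ∫ x, w x * F i x ∂ν) l (nhds (∫ x, w x * f x ∂ν)) := by
  refine tendsto_integral_of_L1' _ (hw.integrable_mul hf).aestronglyMeasurable
    (Eventually.of_forall fun i => hw.integrable_mul (hF i)) ?_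
  have hHolder : ∀ i, eLpNorm ((fun x => w x * F i x) - fun x => w x * f x) 1 ν
      ≤ eLpNorm w 2 ν * eLpNorm (F i - f) 2 ν := fun i => by
    rw [show ((fun x => w x * F i x) - fun x => w x * f x) = w • (F i - f) by
      ext x; simp [mul_sub]]
    exact eLpNorm_smul_le_mul_eLpNorm ((hF i).sub hf).aestronglyMeasurable hw.aestronglyMeasurable
  have hbound : Tendsto (fun i => eLpNorm w 2 ν * eLpNorm (F i - f) 2 ν) l (nhds 0) := by
    simpa using ENNReal.Tendsto.const_mul h (Or.inr hw.eLpNorm_ne_top)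
  exact tendsto_of_tendsto_of_tendsto_of_le_of_le tendsto_const_nhds hbound
    (fun _ => zero_le) hHolder

theorem tendsto_integral_of_tendsto_eLpNorm_two [IsFiniteMeasure ν] {f : α → 𝕜}
    {F : ι → α → 𝕜} (hF : ∀ i, MemLp (F i) 2 ν) (hf : MemLp f 2 ν)
    (h : Tendsto (fun i => eLpNorm (F i - f) 2 ν) l (nhds 0)) :
    Tendsto (fun i => ∫ x, F i x ∂ν) l (nhds (∫ x, f x ∂ν)) := by
  simpa only [one_mul] using tendsto_integral_mul_of_tendsto_eLpNorm_two (memLp_const 1) hF hf h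

theorem tendsto_eLpNorm_restrict {E : Type*} [NormedAddCommGroup E] {p : ℝ≥0∞}
    {G : ι → α → E} (h : Tendsto (fun i => eLpNorm (G i) p ν) l (nhds 0)) (s : Set α) :
    Tendsto (fun i => eLpNorm (G i) p (ν.restrict s)) l (nhds 0) :=
  tendsto_of_tendsto_of_tendsto_of_le_of_le tendsto_const_nhds h (fun _ => zero_le)
    fun _ => eLpNorm_mono_measure _ Measure.restrict_le_self

end L2Convergence

theorem aestronglyMeasurable_of_tendsto_eLpNorm {α ι E : Type*} [NormedAddCommGroup E]
    [CompleteSpace E] {m m0 : MeasurableSpace α} (hm : m ≤ m0) {μ : Measure α} {p : ℝ≥0∞}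
    [Fact (1 ≤ p)] {l : Filter ι} [l.NeBot] {G : ι → α → E} {g : α → E}
    (hGm : ∀ i, StronglyMeasurable[m] (G i)) (hG : ∀ i, MemLp (G i) p μ) (hg : MemLp g p μ)
    (h : Tendsto (fun i => eLpNorm (G i - g) p μ) l (nhds 0)) :
    AEStronglyMeasurable[m] g μ := by
  have hLp : Tendsto (fun i => (hG i).toLp (G i)) l (nhds (hg.toLp g)) :=
    (Lp.tendsto_Lp_iff_tendsto_eLpNorm'' G hG g hg).2 h
  obtain ⟨g₀, hg₀m, hg₀⟩ := (isClosed_aestronglyMeasurable hm).mem_of_tendsto hLp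
    (Eventually.of_forall fun i => ⟨G i, hGm i, (hG i).coeFn_toLp⟩)
  exact ⟨g₀, hg₀m, hg.coeFn_toLp.symm.trans hg₀⟩

namespace Admissible

variable {m : MeasurableSpace X} [MeasurableSpace X] {μ : Measure X} {u : X → ℂ} {A : Set X}

theorem measure_lt_top (hA : Admissible m μ u A) : μ A < ⊤ :=
  lt_of_le_of_lt le_self_add hA.2

theorem memLp_restrict (hA : Admissible m μ u A) (hu : AEStronglyMeasurable u μ) :
    MemLp u 2 (μ.restrict A) := by
  refine ⟨hu.restrict,
    (eLpNorm_lt_top_iff_lintegral_rpow_enorm_lt_top two_ne_zero ofNat_ne_top).2 ?_⟩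
  simpa [enorm_eq_nnnorm] using lt_of_le_of_lt le_add_self hA.2

end Admissible

theorem stmt5_general (m : MeasurableSpace X) [m0 : MeasurableSpace X] (hm : m ≤ m0)
    (μ : Measure X)
    (u : X → ℂ) (hu : Measurable u)
    (fn gn : ℕ → X → ℂ) (f g' : X → ℂ)
    (hfn : ∀ n, MemLp (fn n) 2 μ) (hgn : ∀ n, IsWCE m μ u (fn n) (gn n))
    (hf : MemLp f 2 μ) (hg' : MemLp g' 2 μ)
    (hconv1 : Tendsto (fun n => eLpNorm (fn n - f) 2 μ) atTop (nhds 0))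
    (hconv2 : Tendsto (fun n => eLpNorm (gn n - g') 2 μ) atTop (nhds 0)) :
    ∃ gf : X → ℂ, IsWCE m μ u f gf ∧ gf =ᵐ[μ] g' := by
  have hg'm : AEStronglyMeasurable[m] g' μ := aestronglyMeasurable_of_tendsto_eLpNorm hm
    (fun n => (hgn n).1) (fun n => (hgn n).2.1) hg' hconv2
  refine ⟨hg'm.mk g', ⟨hg'm.stronglyMeasurable_mk, hg'.ae_eq hg'm.ae_eq_mk, fun A hA => ?_⟩,
    hg'm.ae_eq_mk.symm⟩
  have : IsFiniteMeasure (μ.restrict A) := ⟨by simpa using hA.measure_lt_top⟩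
  have lim_uf := tendsto_integral_mul_of_tendsto_eLpNorm_two
    (hA.memLp_restrict hu.aestronglyMeasurable) (fun n => (hfn n).restrict A) (hf.restrict A)
    (tendsto_eLpNorm_restrict hconv1 A)
  have lim_g := tendsto_integral_of_tendsto_eLpNorm_two (fun n => (hgn n).2.1.restrict A)
    (hg'.restrict A) (tendsto_eLpNorm_restrict hconv2 A)
  rw [← integral_congr_ae (ae_restrict_of_ae hg'm.ae_eq_mk)]
  exact tendsto_nhds_unique (lim_uf.congr fun n => (hgn n).2.2 A hA) lim_g

/-- If `E(|u|²) < ∞` a.e., then `EM_u` is closed: if `fₙ ∈ D(EM_u)`, `fₙ → f`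
in `L²(μ)` and `EM_u fₙ → g'` in `L²(μ)`, then `f ∈ D(EM_u)` and `EM_u f = g'`. -/
theorem stmt5 (m : MeasurableSpace X) [m0 : MeasurableSpace X] (hm : m ≤ m0)
    (μ : Measure X) [SigmaFinite μ] [SigmaFinite (μ.trim hm)]
    (u : X → ℂ) (hu : Measurable u)
    (g : X → ℝ≥0∞) (hgm : Measurable[m] g)
    (hg : ∀ A : Set X, MeasurableSet[m] A →
      ∫⁻ x in A, (‖u x‖₊ : ℝ≥0∞) ^ 2 ∂μ = ∫⁻ x in A, g x ∂μ)
    (hgfin : ∀ᵐ x ∂μ, g x < ⊤)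
    (fn gn : ℕ → X → ℂ) (f g' : X → ℂ)
    (hfn : ∀ n, MemLp (fn n) 2 μ) (hgn : ∀ n, IsWCE m μ u (fn n) (gn n))
    (hf : MemLp f 2 μ) (hg' : MemLp g' 2 μ)
    (hconv1 : Tendsto (fun n => eLpNorm (fn n - f) 2 μ) atTop (nhds 0))
    (hconv2 : Tendsto (fun n => eLpNorm (gn n - g') 2 μ) atTop (nhds 0)) :
    ∃ gf : X → ℂ, IsWCE m μ u f gf ∧ gf =ᵐ[μ] g' :=
  stmt5_general m (m0 := m0) hm μ u hu fn gn f g' hfn hgn hf hg' hconv1 hconv2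
end
end

section
/- Let v ∈ L²(μ; ℂ). Let w be an 𝒜-measurable function with ∫_A v dμ = ∫_A w dμ for every A ∈ 𝒜 with μ(A) < ∞ (v is integrable on such A), and let q be an 𝒜-measurable function with values in [0,∞] satisfying ∫_A |v|² dμ = ∫_A q dμ for every A ∈ 𝒜 (so w = E(v) and q = E(|v|²)). If q = |w|² μ-a.e., then v = w μ-a.e.; in particular v is then a.e. equal to an 𝒜-measurable function. -/
open MeasureTheory Filter ENNReal NNReal

noncomputable section

variable {X : Type*}

/-! Taking `A = X` in the defining property of `q` shows `‖v‖₂ = ‖w‖₂`. On the other hand `w` is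
the `L²` conditional expectation of `v`, i.e. its orthogonal projection onto the closed subspace
of `m`-measurable functions. By Pythagoras, a vector whose projection has the same norm lies in
that subspace, so it is its own projection: `v = w`. -/

namespace MeasureTheory

variable {α E 𝕜 : Type*} [RCLike 𝕜] {m m0 : MeasurableSpace α} {μ : Measure α}

theorem eLpNorm_two_eq_of_lintegral_sq_eq {F : Type*} [NormedAddCommGroup E]
    [NormedAddCommGroup F] {f : α → E} {g : α → F}
    (h : ∫⁻ x, ‖f x‖ₑ ^ 2 ∂μ = ∫⁻ x, ‖g x‖ₑ ^ 2 ∂μ) :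
    eLpNorm f 2 μ = eLpNorm g 2 μ := by
  simp only [eLpNorm_eq_lintegral_rpow_enorm_toReal two_ne_zero ofNat_ne_top, toReal_ofNat,
    ENNReal.rpow_two]
  rw [h]

variable [NormedAddCommGroup E] [InnerProductSpace 𝕜 E] [CompleteSpace E]

theorem condExpL2_eq_self_of_norm_eq (hm : m ≤ m0) {f : Lp E 2 μ}
    (h : ‖(condExpL2 E 𝕜 hm f : Lp E 2 μ)‖ = ‖f‖) : (condExpL2 E 𝕜 hm f : Lp E 2 μ) = f :=
  have : Fact (m ≤ m0) := ⟨hm⟩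
  Submodule.starProjection_eq_self_iff.2 ((Submodule.mem_iff_norm_starProjection _ f).2 h)

theorem condExpL2_eq_of_setIntegral_eq [NormedSpace ℝ E] (hm : m ≤ m0)
    [SigmaFinite (μ.trim hm)] {f g : Lp E 2 μ} (hg : AEStronglyMeasurable[m] g μ)
    (h : ∀ s, MeasurableSet[m] s → μ s < ∞ → ∫ x in s, f x ∂μ = ∫ x in s, g x ∂μ) :
    (condExpL2 E 𝕜 hm f : Lp E 2 μ) = g :=
  Lp.ext <| ae_eq_of_forall_setIntegral_eq_of_sigmaFinite' hm
    (fun _ _ hμs => integrableOn_condExpL2_of_measure_ne_top hm hμs.ne f)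
    (fun _ _ hμs => integrableOn_Lp_of_measure_ne_top g one_le_two hμs.ne)
    (fun s hs hμs => (integral_condExpL2_eq hm f hs hμs.ne).trans (h s hs hμs))
    (aestronglyMeasurable_condExpL2 hm f) hg

end MeasureTheory

theorem stmt6_general (m : MeasurableSpace X) [m0 : MeasurableSpace X] (hm : m ≤ m0)
    (μ : Measure X) [SigmaFinite (μ.trim hm)]
    (v : X → ℂ) (hv : MemLp v 2 μ)
    (w : X → ℂ) (hwm : StronglyMeasurable[m] w)
    (hw : ∀ A : Set X, MeasurableSet[m] A → μ A < ⊤ →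
      ∫ x in A, v x ∂μ = ∫ x in A, w x ∂μ)
    (q : X → ℝ≥0∞)
    (hq : ∀ A : Set X, MeasurableSet[m] A →
      ∫⁻ x in A, (‖v x‖₊ : ℝ≥0∞) ^ 2 ∂μ = ∫⁻ x in A, q x ∂μ)
    (heq : q =ᵐ[μ] fun x => (‖w x‖₊ : ℝ≥0∞) ^ 2) :
    v =ᵐ[μ] w := by
  have hnorm : eLpNorm w 2 μ = eLpNorm v 2 μ := by
    refine eLpNorm_two_eq_of_lintegral_sq_eq ?_
    simpa only [enorm_eq_nnnorm, Measure.restrict_univ, lintegral_congr_ae heq]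
      using (hq Set.univ MeasurableSet.univ).symm
  have hw2 : MemLp w 2 μ := ⟨(hwm.mono hm).aestronglyMeasurable, hnorm ▸ hv.eLpNorm_lt_top⟩
  have hcond : (condExpL2 ℂ ℂ hm (hv.toLp v) : Lp ℂ 2 μ) = hw2.toLp w := by
    refine condExpL2_eq_of_setIntegral_eq hm ⟨w, hwm, hw2.coeFn_toLp⟩ fun s hs hμs => ?_
    rw [integral_congr_ae (ae_restrict_of_ae hv.coeFn_toLp),
      integral_congr_ae (ae_restrict_of_ae hw2.coeFn_toLp)]
    exact hw s hs hμs
  have hVW : hv.toLp v = hw2.toLp w := by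
    refine (condExpL2_eq_self_of_norm_eq hm ?_).symm.trans hcond
    rw [hcond, Lp.norm_toLp, Lp.norm_toLp, hnorm]
  exact (MemLp.toLp_eq_toLp_iff hv hw2).1 hVW

/-- If `v ∈ L²(μ)`, `w = E(v)` and `q = E(|v|²)` satisfy `q = |w|²` a.e.,
then `v = w` a.e.; in particular `v` is a.e. equal to an `m`-measurable function. -/
theorem stmt6 (m : MeasurableSpace X) [m0 : MeasurableSpace X] (hm : m ≤ m0)
    (μ : Measure X) [SigmaFinite μ] [SigmaFinite (μ.trim hm)]
    (v : X → ℂ) (hv : MemLp v 2 μ)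
    (w : X → ℂ) (hwm : StronglyMeasurable[m] w)
    (hw : ∀ A : Set X, MeasurableSet[m] A → μ A < ⊤ →
      ∫ x in A, v x ∂μ = ∫ x in A, w x ∂μ)
    (q : X → ℝ≥0∞) (hqm : Measurable[m] q)
    (hq : ∀ A : Set X, MeasurableSet[m] A →
      ∫⁻ x in A, (‖v x‖₊ : ℝ≥0∞) ^ 2 ∂μ = ∫⁻ x in A, q x ∂μ)
    (heq : q =ᵐ[μ] fun x => (‖w x‖₊ : ℝ≥0∞) ^ 2) :
    v =ᵐ[μ] w :=
  stmt6_general m (m0 := m0) hm μ v hv w hwm hw q hq heq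
end
end

section
/- Assume E(|u|²) < ∞ μ-a.e. and set S = {x ∈ X : E(|u|²)(x) > 0}. Then for every f ∈ D(EM_u): (1) EM_u f = 0 μ-a.e. on X ∖ S; and (2) ∫_S E(|u|²)^{-1}·|u|²·|EM_u f|² dμ = ∫_X |EM_u f|² dμ. (This is the identity ‖M_{u'}EM_u f‖₂ = ‖|EM_u| f‖₂ with u' = E(|u|²)^{-1/2}·χ_S·ū, underlying the description of the modulus in the polar decomposition of EM_u.) -/
open MeasureTheory Filter ENNReal NNReal

noncomputable section

variable {X : Type*}

/-!
Since `∫_A |u|² = ∫_A E(|u|²)` for every `A ∈ 𝒜`, integrating `|u|²` and `E(|u|²)` against any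
`𝒜`-measurable weight gives the same result. On `Z = {E(|u|²) = 0}` this forces `u = 0` a.e., so
`∫_A u f = 0` for admissible `A ⊆ Z` and hence `E(uf) = 0` a.e. on `Z`. Taking the weight
`χ_S E(|u|²)⁻¹ |E(uf)|²` then turns the left-hand side into `∫_S |E(uf)|² = ∫_X |E(uf)|²`.
-/

section

variable {m m0 : MeasurableSpace X} {μ : Measure[m0] X}

theorem lintegral_mul_eq_of_forall_setLIntegral_eq (hm : m ≤ m0) {w g : X → ℝ≥0∞}
    (hw : AEMeasurable w μ) (hg : AEMeasurable g μ)
    (hwg : ∀ A, MeasurableSet[m] A → ∫⁻ x in A, w x ∂μ = ∫⁻ x in A, g x ∂μ)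
    {φ : X → ℝ≥0∞} (hφ : Measurable[m] φ) :
    ∫⁻ x, φ x * w x ∂μ = ∫⁻ x, φ x * g x ∂μ := by
  have htrim : (μ.withDensity w).trim hm = (μ.withDensity g).trim hm := by
    refine @Measure.ext X m _ _ fun s hs => ?_
    rw [trim_measurableSet_eq hm hs, trim_measurableSet_eq hm hs,
      withDensity_apply _ (hm s hs), withDensity_apply _ (hm s hs), hwg s hs]
  have hφ0 : AEMeasurable φ μ := (hφ.mono hm le_rfl).aemeasurable
  calc ∫⁻ x, φ x * w x ∂μ = ∫⁻ x, φ x ∂((μ.withDensity w).trim hm) := by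
        rw [lintegral_trim hm hφ, lintegral_withDensity_eq_lintegral_mul₀ hw hφ0]
        simp only [Pi.mul_apply, mul_comm]
    _ = ∫⁻ x, φ x ∂((μ.withDensity g).trim hm) := by rw [htrim]
    _ = ∫⁻ x, φ x * g x ∂μ := by
        rw [lintegral_trim hm hφ, lintegral_withDensity_eq_lintegral_mul₀ hg hφ0]
        simp only [Pi.mul_apply, mul_comm]

theorem ae_eq_zero_of_forall_setLIntegral_eq (hm : m ≤ m0) {w g : X → ℝ≥0∞}
    (hw : AEMeasurable w μ) (hg : Measurable[m] g)
    (hwg : ∀ A, MeasurableSet[m] A → ∫⁻ x in A, w x ∂μ = ∫⁻ x in A, g x ∂μ) :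
    ∀ᵐ x ∂μ, g x = 0 → w x = 0 := by
  have hZ : MeasurableSet[m] {x | g x = 0} := hg (measurableSet_singleton 0)
  refine (setLIntegral_eq_zero_iff' (hm _ hZ) hw.restrict).mp ?_
  rw [hwg _ hZ]
  exact setLIntegral_eq_zero (hm _ hZ) fun x hx => hx

theorem IsWCE.ae_eq_zero_on_of_ae_eq_zero_on (hm : m ≤ m0) [SigmaFinite (μ.trim hm)]
    {u f gf : X → ℂ} (hgf : IsWCE m μ u f gf) {Z : Set X} (hZ : MeasurableSet[m] Z)
    (hu : ∀ᵐ x ∂μ, x ∈ Z → u x = 0) :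
    ∀ᵐ x ∂μ, x ∈ Z → gf x = 0 := by
  obtain ⟨hgf_meas, hgf_L2, hgf_int⟩ := hgf
  have hZ0 : MeasurableSet Z := hm _ hZ
  have hZgf : Z.indicator gf =ᵐ[μ] 0 := by
    refine ae_eq_of_forall_setIntegral_eq_of_sigmaFinite' hm (fun s _ hμs => ?_)
      (fun s _ _ => integrableOn_zero) (fun s hs hμs => ?_)
      (hgf_meas.indicator hZ).aestronglyMeasurable stronglyMeasurable_zero.aestronglyMeasurable
    · have : Fact (μ s < ∞) := ⟨hμs⟩
      exact ((hgf_L2.restrict s).integrable one_le_two).indicator hZ0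
    · have hμsZ : μ (s ∩ Z) < ∞ := (measure_mono Set.inter_subset_left).trans_lt hμs
      have hu_sZ : ∀ᵐ x ∂μ.restrict (s ∩ Z), u x = 0 :=
        (ae_restrict_iff' ((hm _ hs).inter hZ0)).mpr (hu.mono fun x hx hxsZ => hx hxsZ.2)
      have hadm : Admissible m μ u (s ∩ Z) := by
        refine ⟨hs.inter hZ, ?_⟩
        rwa [lintegral_congr_ae (g := fun _ => 0) (hu_sZ.mono fun x hx => by simp [hx]),
          lintegral_zero, add_zero]
      rw [setIntegral_indicator hZ0, ← hgf_int _ hadm]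
      simp only [Pi.zero_apply, integral_zero]
      exact integral_eq_zero_of_ae (hu_sZ.mono fun x hx => by simp [hx])
  filter_upwards [hZgf] with x hx hxZ
  rwa [Set.indicator_of_mem hxZ] at hx

theorem setLIntegral_inv_mul_mul_eq_lintegral (hm : m ≤ m0) {w g ψ : X → ℝ≥0∞}
    (hw : AEMeasurable w μ) (hg : Measurable[m] g)
    (hwg : ∀ A, MeasurableSet[m] A → ∫⁻ x in A, w x ∂μ = ∫⁻ x in A, g x ∂μ)
    (hg_lt_top : ∀ᵐ x ∂μ, g x < ⊤) (hψ : Measurable[m] ψ)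
    (hψ0 : ∀ᵐ x ∂μ, g x = 0 → ψ x = 0) :
    ∫⁻ x in {x | 0 < g x}, (g x)⁻¹ * w x * ψ x ∂μ = ∫⁻ x, ψ x ∂μ := by
  set S := {x | 0 < g x}
  have hS : MeasurableSet[m] S := hg measurableSet_Ioi
  have hφ : Measurable[m] (S.indicator fun x => (g x)⁻¹ * ψ x) := (hg.inv.mul hψ).indicator hS
  calc ∫⁻ x in S, (g x)⁻¹ * w x * ψ x ∂μ
      = ∫⁻ x, S.indicator (fun x => (g x)⁻¹ * ψ x) x * w x ∂μ := by
        rw [← lintegral_indicator (hm _ hS)]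
        congr 1 with x
        by_cases hx : x ∈ S <;> simp [hx, mul_right_comm]
    _ = ∫⁻ x, S.indicator (fun x => (g x)⁻¹ * ψ x) x * g x ∂μ :=
        lintegral_mul_eq_of_forall_setLIntegral_eq hm hw
          (hg.mono hm le_rfl).aemeasurable hwg hφ
    _ = ∫⁻ x, ψ x ∂μ := by
        refine lintegral_congr_ae ?_
        filter_upwards [hg_lt_top, hψ0] with x hx_top hx0
        by_cases hx : x ∈ S
        · rw [Set.indicator_of_mem hx, mul_right_comm,
            ENNReal.inv_mul_cancel (ne_of_gt hx) hx_top.ne, one_mul]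
        · have hgx : g x = 0 := by simpa [S] using hx
          simp [hx, hx0 hgx]

end

theorem stmt9_general (m : MeasurableSpace X) [m0 : MeasurableSpace X] (hm : m ≤ m0)
    (μ : Measure X) [SigmaFinite (μ.trim hm)]
    (u : X → ℂ) (hu : Measurable u)
    (g : X → ℝ≥0∞) (hgm : Measurable[m] g)
    (hg : ∀ A : Set X, MeasurableSet[m] A →
      ∫⁻ x in A, (‖u x‖₊ : ℝ≥0∞) ^ 2 ∂μ = ∫⁻ x in A, g x ∂μ)
    (hgfin : ∀ᵐ x ∂μ, g x < ⊤)
    (f gf : X → ℂ) (hgf : IsWCE m μ u f gf) :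
    (∀ᵐ x ∂μ, g x = 0 → gf x = 0) ∧
    ∫⁻ x in {x | 0 < g x}, (g x)⁻¹ * (‖u x‖₊ : ℝ≥0∞) ^ 2 * (‖gf x‖₊ : ℝ≥0∞) ^ 2 ∂μ =
      ∫⁻ x, (‖gf x‖₊ : ℝ≥0∞) ^ 2 ∂μ := by
  have hw : AEMeasurable (fun x => (‖u x‖₊ : ℝ≥0∞) ^ 2) μ := by fun_prop
  have hu0 : ∀ᵐ x ∂μ, g x = 0 → u x = 0 := by
    filter_upwards [ae_eq_zero_of_forall_setLIntegral_eq hm hw hgm hg] with x hx hgx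
    simpa using hx hgx
  have hgf0 : ∀ᵐ x ∂μ, g x = 0 → gf x = 0 :=
    hgf.ae_eq_zero_on_of_ae_eq_zero_on hm (hgm (measurableSet_singleton 0)) hu0
  have hgf_meas : Measurable[m] fun x => (‖gf x‖₊ : ℝ≥0∞) ^ 2 :=
    (measurable_coe_nnreal_ennreal.comp (measurable_nnnorm.comp hgf.1.measurable)).pow_const 2
  refine ⟨hgf0, setLIntegral_inv_mul_mul_eq_lintegral hm hw hgm hg hgfin hgf_meas ?_⟩
  filter_upwards [hgf0] with x hx hgx
  simp [hx hgx]

/-- With `E(|u|²) < ∞` a.e. and `S = {E(|u|²) > 0}`, for every `f ∈ D(EM_u)`: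
(1) `EM_u f = 0` a.e. off `S`; (2) `∫_S E(|u|²)⁻¹·|u|²·|EM_u f|² dμ = ∫ |EM_u f|² dμ`. -/
theorem stmt9 (m : MeasurableSpace X) [m0 : MeasurableSpace X] (hm : m ≤ m0)
    (μ : Measure X) [SigmaFinite μ] [SigmaFinite (μ.trim hm)]
    (u : X → ℂ) (hu : Measurable u)
    (g : X → ℝ≥0∞) (hgm : Measurable[m] g)
    (hg : ∀ A : Set X, MeasurableSet[m] A →
      ∫⁻ x in A, (‖u x‖₊ : ℝ≥0∞) ^ 2 ∂μ = ∫⁻ x in A, g x ∂μ)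
    (hgfin : ∀ᵐ x ∂μ, g x < ⊤)
    (f gf : X → ℂ) (hf : MemLp f 2 μ) (hgf : IsWCE m μ u f gf) :
    (∀ᵐ x ∂μ, g x = 0 → gf x = 0) ∧
    ∫⁻ x in {x | 0 < g x}, (g x)⁻¹ * (‖u x‖₊ : ℝ≥0∞) ^ 2 * (‖gf x‖₊ : ℝ≥0∞) ^ 2 ∂μ =
      ∫⁻ x, (‖gf x‖₊ : ℝ≥0∞) ^ 2 ∂μ :=
  stmt9_general m (m0 := m0) hm μ u hu g hgm hg hgfin f gf hgf
end
end

section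
/- Assume E(|u|²) < ∞ μ-a.e. and let v = E(u). If λ ∈ ℂ, λ ≠ 0, belongs to the essential range of v, then for every ε > 0 there exists f ∈ D(EM_u) with f ≠ 0 and ‖λ·f − EM_u f‖_{L²(μ)} ≤ ε·‖f‖_{L²(μ)}. (Hence λ − EM_u has no bounded inverse and λ belongs to the spectrum of EM_u.) -/
/-! The approximate eigenvector is an indicator `1_A`, where `A ∈ 𝒜` has positive finite measure,
`|v - λ| < ε` on `A`, and `E(|u|²)` is bounded on `A`. Every `𝒜`-measurable subset of `A` is then
admissible, so the defining property of `v = E(u)` gives `E(u · 1_A) = 1_A · v`, and pointwise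
`|λ 1_A - 1_A v| ≤ ε 1_A`. -/

open MeasureTheory Filter ENNReal NNReal

noncomputable section

variable {X : Type*}

section MeasureTheory

variable {α : Type*}

theorem exists_nat_measure_inter_setOf_le_pos [MeasurableSpace α] {μ : Measure α}
    {g : α → ℝ≥0∞} (hg : ∀ᵐ x ∂μ, g x < ⊤) {S : Set α} (hS : 0 < μ S) :
    ∃ n : ℕ, 0 < μ (S ∩ {x | g x ≤ n}) := by
  by_contra! h
  have hcover : S ≤ᵐ[μ] ⋃ n : ℕ, S ∩ {x | g x ≤ n} := by
    filter_upwards [hg] with x hx hxS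
    obtain ⟨n, hn⟩ := ENNReal.exists_nat_gt hx.ne
    exact Set.mem_iUnion.2 ⟨n, hxS, hn.le⟩
  exact hS.ne' <| measure_mono_null_ae hcover <|
    measure_iUnion_null fun n => nonpos_iff_eq_zero.1 (h n)

theorem exists_measurableSet_subset_measure_pos_lt_top_of_trim {m m0 : MeasurableSpace α}
    (hm : m ≤ m0) {μ : Measure α} [SigmaFinite (μ.trim hm)] {S : Set α}
    (hS : MeasurableSet[m] S) (hμS : 0 < μ S) :
    ∃ A, MeasurableSet[m] A ∧ A ⊆ S ∧ 0 < μ A ∧ μ A < ∞ := by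
  rw [← trim_measurableSet_eq hm hS] at hμS
  obtain ⟨A, hA, hAS, hA0, hAfin⟩ := Measure.exists_subset_measure_lt_top hS hμS
  rw [trim_measurableSet_eq hm hA] at hA0 hAfin
  exact ⟨A, hA, hAS, hA0, hAfin⟩

theorem memLp_indicator_of_norm_le {E : Type*} [NormedAddCommGroup E] [MeasurableSpace α]
    {μ : Measure α} {p : ℝ≥0∞} {f : α → E} (hf : AEStronglyMeasurable f μ) {A : Set α}
    (hA : MeasurableSet A) (hAfin : μ A < ∞) {C : ℝ} (hfC : ∀ x ∈ A, ‖f x‖ ≤ C) :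
    MemLp (A.indicator f) p μ := by
  rw [memLp_indicator_iff_restrict hA]
  have : IsFiniteMeasure (μ.restrict A) := isFiniteMeasure_restrict.2 hAfin.ne
  exact MemLp.of_bound hf.restrict C ((ae_restrict_iff' hA).2 (ae_of_all _ hfC))

end MeasureTheory

section WeightedConditionalExpectation

variable {m : MeasurableSpace X} [MeasurableSpace X] {μ : Measure X} {u : X → ℂ}

theorem Admissible.inter {A B : Set X} (hB : Admissible m μ u B) (hA : MeasurableSet[m] A) :
    Admissible m μ u (B ∩ A) :=
  ⟨hB.1.inter hA, lt_of_le_of_lt (add_le_add (measure_mono Set.inter_subset_left)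
    (lintegral_mono_set Set.inter_subset_left)) hB.2⟩

theorem admissible_of_forall_le {g : X → ℝ≥0∞}
    (hg : ∀ A : Set X, MeasurableSet[m] A →
      ∫⁻ x in A, (‖u x‖₊ : ℝ≥0∞) ^ 2 ∂μ = ∫⁻ x in A, g x ∂μ)
    {A : Set X} (hA : MeasurableSet[m] A) (hAfin : μ A < ∞) {c : ℝ≥0∞} (hc : c ≠ ∞)
    (hgA : ∀ x ∈ A, g x ≤ c) : Admissible m μ u A := by
  refine ⟨hA, ENNReal.add_lt_top.2 ⟨hAfin, ?_⟩⟩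
  calc ∫⁻ x in A, (‖u x‖₊ : ℝ≥0∞) ^ 2 ∂μ = ∫⁻ x in A, g x ∂μ := hg A hA
    _ ≤ ∫⁻ _ in A, c ∂μ := setLIntegral_mono measurable_const hgA
    _ = c * μ A := setLIntegral_const A c
    _ < ∞ := ENNReal.mul_lt_top hc.lt_top hAfin

theorem isWCE_indicator_one (hm : m ≤ ‹MeasurableSpace X›) {v : X → ℂ}
    (hvm : StronglyMeasurable[m] v)
    (hv : ∀ A : Set X, Admissible m μ u A → ∫ x in A, u x ∂μ = ∫ x in A, v x ∂μ)
    {A : Set X} (hA : Admissible m μ u A) {C : ℝ} (hvA : ∀ x ∈ A, ‖v x‖ ≤ C) :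
    IsWCE m μ u (A.indicator 1) (A.indicator v) := by
  have hA0 : MeasurableSet A := hm _ hA.1
  have hAfin : μ A < ∞ := lt_of_le_of_lt le_self_add hA.2
  refine ⟨hvm.indicator hA.1,
    memLp_indicator_of_norm_le (hvm.mono hm).aestronglyMeasurable hA0 hAfin hvA,
    fun B hB => ?_⟩
  have hmul : (fun x => u x * A.indicator 1 x) = A.indicator u := by
    ext x
    by_cases hx : x ∈ A <;> simp [hx]
  rw [hmul, setIntegral_indicator hA0, setIntegral_indicator hA0]
  exact hv _ (hB.inter hA.1)

end WeightedConditionalExpectation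

theorem stmt11_general (m : MeasurableSpace X) [m0 : MeasurableSpace X] (hm : m ≤ m0)
    (μ : Measure X) [SigmaFinite (μ.trim hm)]
    (u : X → ℂ)
    (g : X → ℝ≥0∞) (hgm : Measurable[m] g)
    (hg : ∀ A : Set X, MeasurableSet[m] A →
      ∫⁻ x in A, (‖u x‖₊ : ℝ≥0∞) ^ 2 ∂μ = ∫⁻ x in A, g x ∂μ)
    (hgfin : ∀ᵐ x ∂μ, g x < ⊤)
    (v : X → ℂ) (hvm : StronglyMeasurable[m] v)
    (hv : ∀ A : Set X, Admissible m μ u A → ∫ x in A, u x ∂μ = ∫ x in A, v x ∂μ)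
    (lam : ℂ)
    (hess : ∀ ε : ℝ, 0 < ε → 0 < μ {x | ‖v x - lam‖ < ε}) :
    ∀ ε : ℝ, 0 < ε → ∃ f gf : X → ℂ, MemLp f 2 μ ∧ IsWCE m μ u f gf ∧
      ¬ f =ᵐ[μ] 0 ∧
      eLpNorm (fun x => lam * f x - gf x) 2 μ ≤ ENNReal.ofReal ε * eLpNorm f 2 μ := by
  intro ε hε
  set S := {x | ‖v x - lam‖ < ε}
  have hS : MeasurableSet[m] S :=
    (hvm.sub stronglyMeasurable_const).norm.measurable measurableSet_Iio
  obtain ⟨n, hn⟩ := exists_nat_measure_inter_setOf_le_pos hgfin (hess ε hε)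
  obtain ⟨A, hAm, hAS, hA0, hAfin⟩ :=
    exists_measurableSet_subset_measure_pos_lt_top_of_trim hm
      (hS.inter (hgm measurableSet_Iic)) hn
  have hvA : ∀ x ∈ A, ‖v x - lam‖ < ε := fun x hx => (hAS hx).1
  have hAadm : Admissible m μ u A :=
    admissible_of_forall_le hg hAm hAfin (ENNReal.natCast_ne_top n) fun x hx => (hAS hx).2
  refine ⟨A.indicator 1, A.indicator v, memLp_indicator_const 2 (hm _ hAm) 1 (Or.inr hAfin.ne),
    isWCE_indicator_one hm hvm hv hAadm (C := ‖lam‖ + ε) fun x hx => ?_, ?_, ?_⟩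
  · exact (norm_le_norm_add_norm_sub' (v x) lam).trans (by linarith [hvA x hx])
  · rw [Set.indicator_ae_eq_zero, Function.support_one, Set.inter_univ]
    exact hA0.ne'
  · refine eLpNorm_le_mul_eLpNorm_of_ae_le_mul (ae_of_all _ fun x => ?_) 2
    by_cases hx : x ∈ A
    · simpa [hx, norm_sub_rev] using (hvA x hx).le
    · simp [hx]

/-- With `E(|u|²) < ∞` a.e. and `v = E(u)`, if `λ ≠ 0` is in the essential
range of `v`, then for every `ε > 0` there is `0 ≠ f ∈ D(EM_u)` with
`‖λ·f − EM_u f‖₂ ≤ ε·‖f‖₂`. -/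
theorem stmt11 (m : MeasurableSpace X) [m0 : MeasurableSpace X] (hm : m ≤ m0)
    (μ : Measure X) [SigmaFinite μ] [SigmaFinite (μ.trim hm)]
    (u : X → ℂ) (hu : Measurable u)
    (g : X → ℝ≥0∞) (hgm : Measurable[m] g)
    (hg : ∀ A : Set X, MeasurableSet[m] A →
      ∫⁻ x in A, (‖u x‖₊ : ℝ≥0∞) ^ 2 ∂μ = ∫⁻ x in A, g x ∂μ)
    (hgfin : ∀ᵐ x ∂μ, g x < ⊤)
    (v : X → ℂ) (hvm : StronglyMeasurable[m] v)
    (hv : ∀ A : Set X, Admissible m μ u A → ∫ x in A, u x ∂μ = ∫ x in A, v x ∂μ)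
    (lam : ℂ) (hlam : lam ≠ 0)
    (hess : ∀ ε : ℝ, 0 < ε → 0 < μ {x | ‖v x - lam‖ < ε}) :
    ∀ ε : ℝ, 0 < ε → ∃ f gf : X → ℂ, MemLp f 2 μ ∧ IsWCE m μ u f gf ∧
      ¬ f =ᵐ[μ] 0 ∧
      eLpNorm (fun x => lam * f x - gf x) 2 μ ≤ ENNReal.ofReal ε * eLpNorm f 2 μ :=
  stmt11_general m (m0 := m0) hm μ u g hgm hg hgfin v hvm hv lam hess
end
end

section
/- Assume E(|u|²) < ∞ μ-a.e., let v = E(u), S = {x : E(|u|²)(x) > 0}, and suppose ū·v = E(|u|²) μ-a.e. on S. Define T₁ on D(T₁) = {f ∈ D(EM_u) : E(|u|²)·(EM_u f) ∈ L²(μ)} by T₁ f = E(|u|²)·(EM_u f), and T₂ on D(T₂) = {f ∈ D(EM_u) : ū·v·(EM_u f) ∈ L²(μ)} by T₂ f = ū·v·(EM_u f). Then D(T₁) = D(T₂), this common domain is dense in L²(μ), and T₁ f = T₂ f μ-a.e. for every f ∈ D(T₁). (T₁ and T₂ represent EM_u|EM_u|² and |EM_u|²EM_u, so EM_u is quasinormal.)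 -/
/-! Where `E(|u|²)` vanishes, so does `u` (a.e.): `|u|²` integrates to zero over that
`𝒜`-measurable set. Hence `ū·v = E(|u|²)` holds a.e. on all of `X`, the two multipliers agree
a.e., and so do the domains and the values of `T₁` and `T₂`.

For density, truncate `f ∈ L²` to `Fₙ = Aₙ ∩ {E(|u|²) ≤ n} ∩ {|u| ≤ n}`, where the `Aₙ ∈ 𝒜` have
finite measure and exhaust `X`. Then `u·1_{Fₙ}f ∈ L¹ ∩ L²`, its conditional expectation is a
version of `EM_u(1_{Fₙ}f)` which vanishes off the `𝒜`-set `Aₙ ∩ {E(|u|²) ≤ n}`, so it stays in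
`L²` after multiplication by `E(|u|²)`; and `1_{Fₙ}f → f` in `L²` by dominated convergence. -/

open MeasureTheory Filter ENNReal NNReal

noncomputable section

variable {X : Type*}

open Topology

section Truncation

variable {E : Type*} [NormedAddCommGroup E] [MeasurableSpace X] {μ : Measure X}

theorem tendsto_eLpNorm_indicator_compl {p : ℝ≥0∞} (hp0 : p ≠ 0) (hp : p ≠ ∞) {f : X → E}
    (hf : MemLp f p μ) {F : ℕ → Set X} (hF : ∀ n, MeasurableSet (F n))
    (hcover : ∀ᵐ x ∂μ, ∀ᶠ n in atTop, x ∈ F n) :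
    Tendsto (fun n => eLpNorm ((F n)ᶜ.indicator f) p μ) atTop (𝓝 0) := by
  have hp_pos : 0 < p.toReal := ENNReal.toReal_pos hp0 hp
  have hlint : Tendsto (fun n => ∫⁻ x, ‖(F n)ᶜ.indicator f x‖ₑ ^ p.toReal ∂μ) atTop (𝓝 0) := by
    rw [← lintegral_zero]
    refine tendsto_lintegral_of_dominated_convergence' (fun x => ‖f x‖ₑ ^ p.toReal)
      (fun n => (hf.1.indicator (hF n).compl).enorm.pow_const _)
      (fun n => ae_of_all _ fun x => ?_)
      (lintegral_rpow_enorm_lt_top_of_eLpNorm_lt_top hp0 hp hf.2).ne ?_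
    · dsimp only
      gcongr
      rw [enorm_indicator_eq_indicator_enorm]
      exact Set.indicator_le_self _ _ x
    · filter_upwards [hcover] with x hx
      refine tendsto_const_nhds.congr' (hx.mono fun n hn => ?_)
      simp [Set.indicator_of_notMem (Set.notMem_compl_iff.2 hn), ENNReal.zero_rpow_of_pos hp_pos]
  have hrpow := ((ENNReal.continuous_rpow_const (y := 1 / p.toReal)).tendsto 0).comp hlint
  rw [ENNReal.zero_rpow_of_pos (by positivity)] at hrpow
  simpa only [eLpNorm_eq_lintegral_rpow_enorm_toReal hp0 hp, Function.comp_def] using hrpow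

theorem MeasureTheory.Lp.tendsto_indicator_toLp {p : ℝ≥0∞} [Fact (1 ≤ p)] (hp : p ≠ ∞)
    (f : Lp E p μ) {F : ℕ → Set X} (hF : ∀ n, MeasurableSet (F n))
    (hcover : ∀ᵐ x ∂μ, ∀ᶠ n in atTop, x ∈ F n) :
    Tendsto (fun n => ((Lp.memLp f).indicator (hF n)).toLp ((F n).indicator f)) atTop (𝓝 f) := by
  rw [Lp.tendsto_Lp_iff_tendsto_eLpNorm']
  refine (tendsto_eLpNorm_indicator_compl (zero_lt_one.trans_le Fact.out).ne' hp (Lp.memLp f) hF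
    hcover).congr fun n => ?_
  rw [← eLpNorm_neg]
  refine eLpNorm_congr_ae ?_
  filter_upwards [((Lp.memLp f).indicator (hF n)).coeFn_toLp] with x hx
  by_cases hxF : x ∈ F n <;> simp [hx, hxF]

end Truncation

section WeightedConditionalExpectation

variable {m : MeasurableSpace X} [m0 : MeasurableSpace X] {μ : Measure X} {u : X → ℂ}

theorem ae_eq_zero_of_setLIntegral_nnnorm_sq_eq (hm : m ≤ m0) (hu : Measurable u)
    {g : X → ℝ≥0∞} (hgm : Measurable[m] g)
    (hg : ∀ A : Set X, MeasurableSet[m] A →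
      ∫⁻ x in A, (‖u x‖₊ : ℝ≥0∞) ^ 2 ∂μ = ∫⁻ x in A, g x ∂μ) :
    ∀ᵐ x ∂μ, g x = 0 → u x = 0 := by
  have hZ : MeasurableSet[m] {x | g x = 0} := hgm (measurableSet_singleton 0)
  have hZ0 : ∫⁻ x in {x | g x = 0}, (‖u x‖₊ : ℝ≥0∞) ^ 2 ∂μ = 0 := by
    rw [hg _ hZ, setLIntegral_congr_fun (hm _ hZ) fun x (hx : g x = 0) => hx, lintegral_zero]
  have hvanish := (lintegral_eq_zero_iff (hu.nnnorm.coe_nnreal_ennreal.pow_const 2)).1 hZ0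
  rw [EventuallyEq, ae_restrict_iff' (hm _ hZ)] at hvanish
  filter_upwards [hvanish] with x hx hgx
  simpa using hx hgx

theorem IsWCE.congr_left {f f' gf : X → ℂ} (h : IsWCE m μ u f gf) (hff' : f =ᵐ[μ] f') :
    IsWCE m μ u f' gf := by
  refine ⟨h.1, h.2.1, fun A hA => ?_⟩
  rw [← h.2.2 A hA]
  exact integral_congr_ae (ae_restrict_of_ae (hff'.mono fun x hx => by simp only [hx]))

theorem isWCE_condExp (hm : m ≤ m0) [SigmaFinite (μ.trim hm)] {f : X → ℂ}
    (hint : Integrable (fun x => u x * f x) μ) (hL2 : MemLp (fun x => u x * f x) 2 μ) :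
    IsWCE m μ u f (μ[fun x => u x * f x | m]) :=
  ⟨stronglyMeasurable_condExp, hL2.condExp one_le_two,
    fun _ hA => (setIntegral_condExp hm hint hA.1).symm⟩

theorem memLp_mul_condExp_of_indicator_eq_self (hm : m ≤ m0) [SigmaFinite (μ.trim hm)]
    {w φ : X → ℂ} (hint : Integrable w μ) (hL2 : MemLp w 2 μ) {G : Set X}
    (hG : MeasurableSet[m] G) (hwG : G.indicator w = w) (hφ : AEStronglyMeasurable φ μ) {c : ℝ}
    (hφG : ∀ x ∈ G, ‖φ x‖ ≤ c) :
    MemLp (fun x => φ x * μ[w | m] x) 2 μ := by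
  refine (hL2.condExp (m := m) one_le_two).of_le_mul (c := c) (hφ.mul integrable_condExp.1) ?_
  have hsupp : μ[w | m] =ᵐ[μ] G.indicator (μ[w | m]) := by
    simpa only [hwG] using condExp_indicator hint hG
  filter_upwards [hsupp] with x hx
  rw [norm_mul]
  by_cases hxG : x ∈ G
  · exact mul_le_mul_of_nonneg_right (hφG x hxG) (norm_nonneg _)
  · simp [hx, hxG]

theorem exists_isWCE_indicator_of_norm_le (hm : m ≤ m0) [SigmaFinite (μ.trim hm)]
    (hu : AEStronglyMeasurable u μ) {φ : X → ℂ} (hφ : AEStronglyMeasurable φ μ) {f : X → ℂ}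
    (hf : MemLp f 2 μ) {G F : Set X} (hG : MeasurableSet[m] G) (hGfin : μ G ≠ ∞)
    (hF : MeasurableSet F) (hFG : F ⊆ G) {c : ℝ} (hφG : ∀ x ∈ G, ‖φ x‖ ≤ c)
    (huF : ∀ x ∈ F, ‖u x‖ ≤ c) :
    ∃ gf, IsWCE m μ u (F.indicator f) gf ∧ MemLp (fun x => φ x * gf x) 2 μ := by
  have hw : (fun x => u x * F.indicator f x) = F.indicator (fun x => u x * f x) :=
    funext fun x => (Set.indicator_mul_right F u f).symm
  have hL2F : MemLp (fun x => u x * f x) 2 (μ.restrict F) :=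
    (hf.restrict F).of_le_mul (c := c) (hu.mul hf.1).restrict <|
      ae_restrict_of_forall_mem hF fun x hx => by
        rw [norm_mul]; exact mul_le_mul_of_nonneg_right (huF x hx) (norm_nonneg _)
  have : IsFiniteMeasure (μ.restrict F) :=
    isFiniteMeasure_restrict.2 ((measure_mono hFG).trans_lt hGfin.lt_top).ne
  have hint : Integrable (fun x => u x * F.indicator f x) μ := by
    rw [hw, integrable_indicator_iff hF]; exact hL2F.integrable one_le_two
  have hL2 : MemLp (fun x => u x * F.indicator f x) 2 μ := by
    rw [hw, memLp_indicator_iff_restrict hF]; exact hL2F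
  have hwG : G.indicator (fun x => u x * F.indicator f x) = fun x => u x * F.indicator f x := by
    rw [hw, Set.indicator_indicator, Set.inter_eq_right.2 hFG]
  exact ⟨_, isWCE_condExp hm hint hL2,
    memLp_mul_condExp_of_indicator_eq_self hm hint hL2 hG hwG hφ hφG⟩

theorem dense_setOf_isWCE_mul_memLp (hm : m ≤ m0) [SigmaFinite (μ.trim hm)] (hu : Measurable u)
    {φ : X → ℂ} (hφ : StronglyMeasurable[m] φ) :
    Dense {f : Lp ℂ 2 μ | ∃ gf, IsWCE m μ u f gf ∧ MemLp (fun x => φ x * gf x) 2 μ} := by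
  let G : ℕ → Set X := fun n => spanningSets (μ.trim hm) n ∩ {x | ‖φ x‖ ≤ n}
  let F : ℕ → Set X := fun n => G n ∩ {x | ‖u x‖ ≤ n}
  have hG : ∀ n, MeasurableSet[m] (G n) := fun n =>
    (measurableSet_spanningSets (μ.trim hm) n).inter
      (hφ.norm.measurableSet_le stronglyMeasurable_const)
  have hGfin : ∀ n, μ (G n) ≠ ∞ := fun n => by
    refine ((measure_mono Set.inter_subset_left).trans_lt ?_).ne
    rw [← trim_measurableSet_eq hm (measurableSet_spanningSets (μ.trim hm) n)]
    exact measure_spanningSets_lt_top (μ.trim hm) n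
  have hF : ∀ n, MeasurableSet (F n) := fun n =>
    (hm _ (hG n)).inter (measurableSet_le hu.norm measurable_const)
  have hcover : ∀ x, ∀ᶠ n : ℕ in atTop, x ∈ F n := fun x =>
    ((eventually_mem_spanningSets (μ.trim hm) x).and
      (tendsto_natCast_atTop_atTop.eventually_ge_atTop ‖φ x‖)).and
      (tendsto_natCast_atTop_atTop.eventually_ge_atTop ‖u x‖)
  rw [dense_iff_closure_eq, Set.eq_univ_iff_forall]
  intro f
  refine mem_closure_of_tendsto
    (Lp.tendsto_indicator_toLp ENNReal.ofNat_ne_top f hF (ae_of_all _ hcover))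
    (Eventually.of_forall fun n => ?_)
  obtain ⟨gf, hgf, hφgf⟩ := exists_isWCE_indicator_of_norm_le hm hu.aestronglyMeasurable
    (hφ.mono hm).aestronglyMeasurable (Lp.memLp f) (hG n) (hGfin n) (hF n) Set.inter_subset_left
    (fun x hx => hx.2) (fun x hx => hx.2)
  exact ⟨gf, hgf.congr_left ((Lp.memLp f).indicator (hF n)).coeFn_toLp.symm, hφgf⟩

end WeightedConditionalExpectation

theorem stmt14_general (m : MeasurableSpace X) [m0 : MeasurableSpace X] (hm : m ≤ m0)
    (μ : Measure X) [SigmaFinite (μ.trim hm)]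
    (u : X → ℂ) (hu : Measurable u)
    (g : X → ℝ≥0∞) (hgm : Measurable[m] g)
    (hg : ∀ A : Set X, MeasurableSet[m] A →
      ∫⁻ x in A, (‖u x‖₊ : ℝ≥0∞) ^ 2 ∂μ = ∫⁻ x in A, g x ∂μ)
    (v : X → ℂ)
    (hqn : ∀ᵐ x ∂μ, g x ≠ 0 → (starRingEnd ℂ) (u x) * v x = ((g x).toReal : ℂ)) :
    (∀ f : X → ℂ, MemLp f 2 μ →
      ((∃ gf : X → ℂ, IsWCE m μ u f gf ∧
          MemLp (fun x => ((g x).toReal : ℂ) * gf x) 2 μ) ↔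
        (∃ gf : X → ℂ, IsWCE m μ u f gf ∧
          MemLp (fun x => (starRingEnd ℂ) (u x) * v x * gf x) 2 μ))) ∧
    Dense {f : Lp ℂ 2 μ | ∃ gf : X → ℂ, IsWCE m μ u (f : X → ℂ) gf ∧
      MemLp (fun x => ((g x).toReal : ℂ) * gf x) 2 μ} ∧
    ∀ f gf : X → ℂ, MemLp f 2 μ → IsWCE m μ u f gf →
      MemLp (fun x => ((g x).toReal : ℂ) * gf x) 2 μ →
      (fun x => ((g x).toReal : ℂ) * gf x) =ᵐ[μ]
        fun x => (starRingEnd ℂ) (u x) * v x * gf x := by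
  have hT : ∀ gf : X → ℂ, (fun x => ((g x).toReal : ℂ) * gf x) =ᵐ[μ]
      fun x => (starRingEnd ℂ) (u x) * v x * gf x := fun gf => by
    filter_upwards [hqn, ae_eq_zero_of_setLIntegral_nnnorm_sq_eq hm hu hgm hg] with x hqnx hux
    by_cases hgx : g x = 0
    · simp [hgx, hux hgx]
    · rw [hqnx hgx]
  refine ⟨fun f _ => ⟨fun ⟨gf, hgf, hT₁⟩ => ⟨gf, hgf, hT₁.ae_eq (hT gf)⟩,
      fun ⟨gf, hgf, hT₂⟩ => ⟨gf, hgf, hT₂.ae_eq (hT gf).symm⟩⟩,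
    dense_setOf_isWCE_mul_memLp hm hu
      (Complex.measurable_ofReal.comp hgm.ennreal_toReal).stronglyMeasurable,
    fun _ gf _ _ _ => hT gf⟩

/-- With `E(|u|²) < ∞` a.e., `v = E(u)`, `S = {E(|u|²) > 0}` and
`ū·v = E(|u|²)` a.e. on `S`, the operators `T₁ f = E(|u|²)·(EM_u f)` and
`T₂ f = ū·v·(EM_u f)` (with the natural domains inside `D(EM_u)`) have equal dense domains
and agree a.e. there (so `EM_u` is quasinormal). -/
theorem stmt14 (m : MeasurableSpace X) [m0 : MeasurableSpace X] (hm : m ≤ m0)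
    (μ : Measure X) [SigmaFinite μ] [SigmaFinite (μ.trim hm)]
    (u : X → ℂ) (hu : Measurable u)
    (g : X → ℝ≥0∞) (hgm : Measurable[m] g)
    (hg : ∀ A : Set X, MeasurableSet[m] A →
      ∫⁻ x in A, (‖u x‖₊ : ℝ≥0∞) ^ 2 ∂μ = ∫⁻ x in A, g x ∂μ)
    (hgfin : ∀ᵐ x ∂μ, g x < ⊤)
    (v : X → ℂ) (hvm : StronglyMeasurable[m] v)
    (hv : ∀ A : Set X, Admissible m μ u A → ∫ x in A, u x ∂μ = ∫ x in A, v x ∂μ)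
    (hqn : ∀ᵐ x ∂μ, g x ≠ 0 → (starRingEnd ℂ) (u x) * v x = ((g x).toReal : ℂ)) :
    (∀ f : X → ℂ, MemLp f 2 μ →
      ((∃ gf : X → ℂ, IsWCE m μ u f gf ∧
          MemLp (fun x => ((g x).toReal : ℂ) * gf x) 2 μ) ↔
        (∃ gf : X → ℂ, IsWCE m μ u f gf ∧
          MemLp (fun x => (starRingEnd ℂ) (u x) * v x * gf x) 2 μ))) ∧
    Dense {f : Lp ℂ 2 μ | ∃ gf : X → ℂ, IsWCE m μ u (f : X → ℂ) gf ∧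
      MemLp (fun x => ((g x).toReal : ℂ) * gf x) 2 μ} ∧
    ∀ f gf : X → ℂ, MemLp f 2 μ → IsWCE m μ u f gf →
      MemLp (fun x => ((g x).toReal : ℂ) * gf x) 2 μ →
      (fun x => ((g x).toReal : ℂ) * gf x) =ᵐ[μ]
        fun x => (starRingEnd ℂ) (u x) * v x * gf x :=
  stmt14_general m (m0 := m0) hm μ u hu g hgm hg v hqn
end
end

section
/- Let (X, Σ, μ) be a σ-finite measure space and let u : X → ℂ be Σ-measurable (so that the multiplication operator M_u with domain D(M_u) = {f ∈ L²(μ) : u·f ∈ L²(μ)}, M_u f = u·f, is densely defined). Then the following are equivalent: (i) u·f ∈ D(M_u) for every f ∈ D(M_u) (i.e., M_u(D(M_u)) ⊆ D(M_u)); (ii) there exists a constant c > 0 such that |u|⁴ ≤ c·(1 + |u|²) μ-a.e. on X. -/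
/-!
If `‖u‖⁴ ≤ c (1 + ‖u‖²)` then `‖u‖² ≤ c + 1`, so multiplication by `u²` preserves `L²`.
Conversely, put `w = 1 + ‖u‖²` and `ψ = ‖u‖⁴ / w`. Writing `‖f‖² = g / w`, invariance of the
domain says that `∫ ψ g < ∞` whenever `∫ g < ∞`, and a function with this property is
essentially bounded: otherwise, for sets `B k ⊆ {ψ > 2 ^ k}` of finite positive measure,
`g = ∑ 2⁻ᵏ 𝟙_{B k} / μ (B k)` is integrable while `∫ ψ g = ∞`. An essential bound `ψ ≤ C` is
exactly `‖u‖⁴ ≤ C (1 + ‖u‖²)`.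
-/

open MeasureTheory Filter ENNReal NNReal

noncomputable section

variable {X : Type*}

section MultiplicationOperator

variable [MeasurableSpace X] {μ : Measure X}

theorem memLp_two_iff_lintegral_enorm_sq_lt_top {E : Type*} [NormedAddCommGroup E] {f : X → E}
    (hf : AEStronglyMeasurable f μ) : MemLp f 2 μ ↔ ∫⁻ x, ‖f x‖ₑ ^ 2 ∂μ < ∞ := by
  rw [MemLp, eLpNorm_lt_top_iff_lintegral_rpow_enorm_lt_top (by norm_num) (by norm_num)]
  simp [hf]

theorem exists_lintegral_lt_top_lintegral_mul_eq_top [SigmaFinite μ] {ψ : X → ℝ≥0∞}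
    (hψ : Measurable ψ) (hψ_unbdd : ∀ C : ℝ≥0, μ {x | C < ψ x} ≠ 0) :
    ∃ g : X → ℝ≥0∞, Measurable g ∧ ∫⁻ x, g x ∂μ < ∞ ∧ ∫⁻ x, ψ x * g x ∂μ = ∞ := by
  have hB : ∀ k : ℕ, ∃ B, MeasurableSet B ∧ B ⊆ ψ ⁻¹' Set.Ioi (2 ^ k) ∧ 0 < μ B ∧ μ B < ∞ :=
    fun k => by
      simpa using Measure.exists_subset_measure_lt_top (hψ measurableSet_Ioi)
        (pos_iff_ne_zero.2 (hψ_unbdd (2 ^ k)))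
  choose B hBm hBψ hBpos hBfin using hB
  set c : ℕ → ℝ≥0∞ := fun k => (2 ^ k * μ (B k))⁻¹
  have hc : ∀ k, c k * μ (B k) = 2⁻¹ ^ k := fun k => by
    simp only [c]
    rw [ENNReal.mul_inv (by simp) (by simp), mul_assoc,
      ENNReal.inv_mul_cancel (hBpos k).ne' (hBfin k).ne, mul_one, ENNReal.inv_pow]
  refine ⟨fun x => ∑' k, (B k).indicator (fun _ => c k) x,
    Measurable.tsum fun k => measurable_const.indicator (hBm k), ?_, ?_⟩
  · rw [lintegral_tsum fun k => (measurable_const.indicator (hBm k)).aemeasurable]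
    simp_rw [lintegral_indicator_const (hBm _), hc, ENNReal.tsum_geometric,
      ENNReal.one_sub_inv_two, inv_inv]
    exact ofNat_lt_top
  · have hterm : ∀ k, 1 ≤ ∫⁻ x, ψ x * (B k).indicator (fun _ => c k) x ∂μ := fun k =>
      calc 1 = ∫⁻ x, (B k).indicator (fun _ => 2 ^ k * c k) x ∂μ := by
              rw [lintegral_indicator_const (hBm k), mul_assoc, hc, ← mul_pow,
                ENNReal.mul_inv_cancel two_ne_zero ofNat_ne_top, one_pow]
        _ ≤ ∫⁻ x, ψ x * (B k).indicator (fun _ => c k) x ∂μ := by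
              refine lintegral_mono fun x => ?_
              by_cases hx : x ∈ B k
              · simp only [Set.indicator_of_mem hx]
                gcongr
                exact (show 2 ^ k < ψ x from hBψ k hx).le
              · simp [hx]
    simp_rw [← ENNReal.tsum_mul_left]
    rw [lintegral_tsum (f := fun k x => ψ x * (B k).indicator (fun _ => c k) x)
      fun k => (hψ.mul (measurable_const.indicator (hBm k))).aemeasurable]
    exact eq_top_mono (ENNReal.tsum_le_tsum hterm)
      (ENNReal.tsum_const_eq_top_of_ne_zero one_ne_zero)

theorem exists_ae_le_of_forall_lintegral_mul_lt_top [SigmaFinite μ] {ψ : X → ℝ≥0∞}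
    (hψ : Measurable ψ)
    (h : ∀ g : X → ℝ≥0∞, Measurable g → ∫⁻ x, g x ∂μ < ∞ → ∫⁻ x, ψ x * g x ∂μ < ∞) :
    ∃ C : ℝ≥0, ∀ᵐ x ∂μ, ψ x ≤ C := by
  by_contra! hψ_unbdd
  obtain ⟨g, hg, hg_int, hψg⟩ := exists_lintegral_lt_top_lintegral_mul_eq_top hψ fun C h0 =>
    hψ_unbdd C (ae_iff.2 (by simpa using h0))
  exact (h g hg hg_int).ne hψg

theorem exists_measurable_enorm_sq_ae_eq (𝕜 : Type*) [RCLike 𝕜] {h : X → ℝ≥0∞}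
    (hh : Measurable h) (hfin : ∀ᵐ x ∂μ, h x ≠ ∞) :
    ∃ f : X → 𝕜, Measurable f ∧ ∀ᵐ x ∂μ, ‖f x‖ₑ ^ 2 = h x := by
  refine ⟨fun x => ((√(h x).toReal : ℝ) : 𝕜), by fun_prop, hfin.mono fun x hx => ?_⟩
  rw [← ofReal_norm, RCLike.norm_ofReal, abs_of_nonneg (Real.sqrt_nonneg _),
    ← ENNReal.ofReal_pow (Real.sqrt_nonneg _), Real.sq_sqrt ENNReal.toReal_nonneg,
    ofReal_toReal hx]

theorem lintegral_enorm_pow_four_mul_lt_top {𝕜 : Type*} [RCLike 𝕜] {u : X → 𝕜}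
    (hu : Measurable u)
    (H : ∀ f : X → 𝕜, MemLp f 2 μ → MemLp (fun x => u x * f x) 2 μ →
      MemLp (fun x => u x * (u x * f x)) 2 μ)
    {h : X → ℝ≥0∞} (hh : Measurable h) (hint : ∫⁻ x, (1 + ‖u x‖ₑ ^ 2) * h x ∂μ < ∞) :
    ∫⁻ x, ‖u x‖ₑ ^ 4 * h x ∂μ < ∞ := by
  have hh_int : ∫⁻ x, h x ∂μ < ∞ :=
    (lintegral_mono fun x => le_mul_of_one_le_left' le_self_add).trans_lt hint
  have hu_int : ∫⁻ x, ‖u x‖ₑ ^ 2 * h x ∂μ < ∞ :=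
    (lintegral_mono fun x => by gcongr; exact le_add_self).trans_lt hint
  obtain ⟨f, hf, hfh⟩ := exists_measurable_enorm_sq_ae_eq 𝕜 hh (ae_lt_top hh hh_int.ne).ne_of_lt
  have hf2 : MemLp f 2 μ := by
    rwa [memLp_two_iff_lintegral_enorm_sq_lt_top hf.aestronglyMeasurable, lintegral_congr_ae hfh]
  have huf : MemLp (fun x => u x * f x) 2 μ := by
    refine (memLp_two_iff_lintegral_enorm_sq_lt_top (by fun_prop)).2 <|
      lt_of_eq_of_lt (lintegral_congr_ae (hfh.mono fun x hx => ?_)) hu_int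
    simp only [enorm_mul, mul_pow, hx]
  have huuf := (memLp_two_iff_lintegral_enorm_sq_lt_top (H f hf2 huf).1).1 (H f hf2 huf)
  refine lt_of_eq_of_lt (lintegral_congr_ae (hfh.mono fun x hx => ?_)) huuf
  simp only [enorm_mul, mul_pow, ← hx]
  ring

theorem memLp_mul_mul_of_ae_pow_four_le {𝕜 : Type*} [RCLike 𝕜] {p : ℝ≥0∞} {u f : X → 𝕜}
    (hu : AEStronglyMeasurable u μ) {c : ℝ} (hc : ∀ᵐ x ∂μ, ‖u x‖ ^ 4 ≤ c * (1 + ‖u x‖ ^ 2))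
    (hf : MemLp f p μ) : MemLp (fun x => u x * (u x * f x)) p μ := by
  refine hf.of_le_mul (c := c + 1) (hu.mul (hu.mul hf.1)) (hc.mono fun x hx => ?_)
  have hsq : ‖u x‖ ^ 2 ≤ c + 1 := by nlinarith [sq_nonneg (‖u x‖ ^ 2), sq_nonneg ‖u x‖]
  rw [norm_mul, norm_mul, ← mul_assoc, ← sq]
  gcongr

theorem exists_ae_enorm_pow_four_div_le [SigmaFinite μ] {𝕜 : Type*} [RCLike 𝕜] {u : X → 𝕜}
    (hu : Measurable u)
    (H : ∀ f : X → 𝕜, MemLp f 2 μ → MemLp (fun x => u x * f x) 2 μ →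
      MemLp (fun x => u x * (u x * f x)) 2 μ) :
    ∃ C : ℝ≥0, ∀ᵐ x ∂μ, ‖u x‖ₑ ^ 4 / (1 + ‖u x‖ₑ ^ 2) ≤ C := by
  refine exists_ae_le_of_forall_lintegral_mul_lt_top (by fun_prop) fun g hg hg_int => ?_
  have hw : ∀ x, (1 + ‖u x‖ₑ ^ 2) * (g x / (1 + ‖u x‖ₑ ^ 2)) = g x := fun x =>
    ENNReal.mul_div_cancel (by simp) (by simp)
  have := lintegral_enorm_pow_four_mul_lt_top hu H (h := fun x => g x / (1 + ‖u x‖ₑ ^ 2))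
    (by fun_prop) (by simpa only [hw] using hg_int)
  convert this using 3 with x
  simp only [div_eq_mul_inv]
  ring

end MultiplicationOperator

/-- For the multiplication operator `M_u` on `L²(μ)` with domain
`{f ∈ L² : u·f ∈ L²}`, one has `M_u(D(M_u)) ⊆ D(M_u)` iff there is `c > 0` with
`|u|⁴ ≤ c·(1 + |u|²)` a.e. -/
theorem stmt19 [m0 : MeasurableSpace X] (μ : Measure X) [SigmaFinite μ]
    (u : X → ℂ) (hu : Measurable u) :
    (∀ f : X → ℂ, MemLp f 2 μ → MemLp (fun x => u x * f x) 2 μ →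
      MemLp (fun x => u x * (u x * f x)) 2 μ) ↔
    ∃ c : ℝ, 0 < c ∧ ∀ᵐ x ∂μ, ‖u x‖ ^ 4 ≤ c * (1 + ‖u x‖ ^ 2) := by
  refine ⟨fun H => ?_, fun ⟨c, _, hc⟩ f hf _ =>
    memLp_mul_mul_of_ae_pow_four_le hu.aestronglyMeasurable hc hf⟩
  obtain ⟨C, hC⟩ := exists_ae_enorm_pow_four_div_le hu H
  refine ⟨C + 1, by positivity, hC.mono fun x hx => ?_⟩
  rw [ENNReal.div_le_iff (by simp) (by simp), enorm_eq_nnnorm] at hx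
  have hC_le : ‖u x‖ ^ 4 ≤ C * (1 + ‖u x‖ ^ 2) := by exact_mod_cast hx
  nlinarith [sq_nonneg ‖u x‖]
end
end
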